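/- Let R be a commutative Noetherian local ring and M ≠ 0, N finitely generated R-modules such that M ⊗_R N ≅ M^{⊕μ(N)}. If M is faithful (i.e., Ann_R(M) = 0), then N is a free R-module. -/

import Mathlib

/-! Take a surjection `f : R^μ(N) → N`. Tensoring with `M` gives a surjection `M^μ(N) → M ⊗ N ≅ M^μ(N)`,
i.e. a surjective endomorphism of a finitely generated module, which is therefore injective.
So `m ⊗ k = 0` for every `m` and every `k ∈ ker f`; reading coordinates, every `kᵢ` kills `M`,
hence vanishes by faithfulness, and `f` is an isomorphism. -/

open TensorProduct

/-- The minimal number of generators of an `R`-module `M`. -/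
noncomputable def minGens (R : Type*) [Semiring R] (M : Type*) [AddCommMonoid M]
    [Module R M] : ℕ :=
  sInf {n : ℕ | ∃ f : (Fin n → R) →ₗ[R] M, Function.Surjective f}

open Function

theorem exists_surjective_fin_minGens (R N : Type*) [Semiring R] [AddCommMonoid N] [Module R N]
    [Module.Finite R N] :
    ∃ f : (Fin (minGens R N) → R) →ₗ[R] N, Surjective f := by
  obtain ⟨k, f, hf⟩ := Module.Finite.exists_fin' R N
  exact Nat.sInf_mem (s := {n : ℕ | ∃ f : (Fin n → R) →ₗ[R] N, Surjective f}) ⟨k, f, hf⟩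

section

variable {R M N : Type*} [CommRing R] [AddCommGroup M] [Module R M] [AddCommGroup N] [Module R N]

theorem lTensor_injective_of_surjective_of_equiv_pi [Module.Finite R M]
    {ι : Type*} [Fintype ι] [DecidableEq ι] {f : (ι → R) →ₗ[R] N} (hf : Surjective f)
    (e : M ⊗[R] N ≃ₗ[R] (ι → M)) : Injective (f.lTensor M) := by
  let σ := piScalarRight R R M ι
  let φ : (ι → M) →ₗ[R] (ι → M) := e.toLinearMap ∘ₗ f.lTensor M ∘ₗ σ.symm.toLinearMap
  have hφ : Surjective φ :=
    e.surjective.comp ((LinearMap.lTensor_surjective M hf).comp σ.symm.surjective)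
  have hφinj : Injective φ := OrzechProperty.injective_of_surjective_endomorphism φ hφ
  have hlTensor_eq : f.lTensor M = e.symm.toLinearMap ∘ₗ φ ∘ₗ σ.toLinearMap := by
    ext x
    simp [φ]
  rw [hlTensor_eq]
  exact e.symm.injective.comp (hφinj.comp σ.injective)

theorem injective_of_lTensor_injective_of_annihilator_eq_bot
    (hM : Module.annihilator R M = ⊥) {ι : Type*} [Fintype ι] [DecidableEq ι]
    {f : (ι → R) →ₗ[R] N} (hf : Injective (f.lTensor M)) : Injective f := by
  rw [injective_iff_map_eq_zero]
  intro k hk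
  have htmul (m : M) : m ⊗ₜ[R] k = 0 := hf (by simp [hk])
  funext i
  have hki : k i ∈ Module.annihilator R M := Module.mem_annihilator.mpr fun m ↦ by
    simpa using congrFun (congrArg (piScalarRight R R M ι) (htmul m)) i
  simpa [hM] using hki

end

theorem stmt2_general {R : Type*} [CommRing R]
    {M N : Type*} [AddCommGroup M] [Module R M] [Module.Finite R M]
    [AddCommGroup N] [Module R N] [Module.Finite R N]
    (h : Nonempty ((M ⊗[R] N) ≃ₗ[R] (Fin (minGens R N) → M)))
    (hf : Module.annihilator R M = ⊥) :
    Module.Free R N := by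
  obtain ⟨e⟩ := h
  obtain ⟨f, hfsurj⟩ := exists_surjective_fin_minGens R N
  have hfinj : Injective f := injective_of_lTensor_injective_of_annihilator_eq_bot hf
    (lTensor_injective_of_surjective_of_equiv_pi hfsurj e)
  exact Module.Free.of_equiv (LinearEquiv.ofBijective f ⟨hfinj, hfsurj⟩)

/-- If `R` is a commutative Noetherian local ring, `M ≠ 0`, `N` are finitely generated
`R`-modules with `M ⊗_R N ≅ M^{μ(N)}` and `M` is faithful (`Ann_R M = 0`),
then `N` is a free `R`-module. -/
theorem stmt2 {R : Type*} [CommRing R] [IsNoetherianRing R] [IsLocalRing R]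
    {M N : Type*} [AddCommGroup M] [Module R M] [Module.Finite R M] [Nontrivial M]
    [AddCommGroup N] [Module R N] [Module.Finite R N]
    (h : Nonempty ((M ⊗[R] N) ≃ₗ[R] (Fin (minGens R N) → M)))
    (hf : Module.annihilator R M = ⊥) :
    Module.Free R N :=
  stmt2_general h hf
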